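/- arXiv:2110.11761 — 2 statements merged into one kernel-verified Lean document; each statement's English description precedes it below -/
import Mathlib

section
/- Let C ∈ ℝ and ε ∈ {+1, −1}. Let H : (0,∞) → ℝ be twice differentiable and satisfy the Riccati equation r·H'(r) + H(r) − H(r)² = C·r² for all r > 0, and let K : (0,∞) → ℝ be any differentiable function such that 1 − K(r)² + r·H'(r) − H(r) > 0 for all r > 0. Define M(r) := ε·√(1 − K(r)² + r·H'(r) − H(r)) and L(r) := −ε·(r·K'(r) − K(r)² + 1 + r·H'(r) − (K(r)+1)·H(r)) / √(1 − K(r)² + r·H'(r) − H(r)). Then the quadruple (K, L, M, H) satisfies the spherically symmetric Bogomol'nyi ODE system on (0,∞). -/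
/-- The spherically symmetric Bogomol'nyi ODE system for functions
`K L M H : ℝ → ℝ`, required for all `r > 0`:
(I)   r·K'(r) + M(r)·(L(r)+M(r)) = K(r)·H(r);
(II)  −r·K'(r) + K(r)² − 1 − L(r)·M(r) = r·H'(r) − H(r) − K(r)·H(r);
(III) r·M'(r) − K(r)·(L(r)+M(r)) = M(r)·H(r). -/
def BogomolnyiSystem (K L M H : ℝ → ℝ) : Prop :=
  ∀ r > (0 : ℝ),
    r * deriv K r + M r * (L r + M r) = K r * H r ∧
    -(r * deriv K r) + (K r) ^ 2 - 1 - L r * M r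
      = r * deriv H r - H r - K r * H r ∧
    r * deriv M r - K r * (L r + M r) = M r * H r

/-!
On `(0, ∞)` write `S = 1 - K² + r H' - H`, so that `M = ε √S` and, since `ε² = 1`,
`M² = S` and `L M = -(r K' + S - K H)`. Equations (I) and (II) are then identities.
Multiplying (III) by `M` turns it into `r S' / 2 - K (K H - r K') = S H`, and as
`S' = r H'' - 2 K K'` this reduces to `r² H'' = 2 (H - H² + r H H')`, which is the Riccati
equation `r H' + H - H² = C r²` differentiated once and multiplied by `r`, with `C r²`
eliminated. The equation also gives `H' = (C r² - H + H²) / r`, so `H'` is differentiable.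
-/

open Topology

noncomputable def bogomolnyiRadicand (K H : ℝ → ℝ) (r : ℝ) : ℝ :=
  1 - K r ^ 2 + r * deriv H r - H r

theorem hasDerivAt_deriv_of_riccati {C r : ℝ} {H : ℝ → ℝ} (hr : r ≠ 0)
    (hH : DifferentiableAt ℝ H r)
    (hRiccati : ∀ᶠ x in 𝓝 r, x * deriv H x + H x - H x ^ 2 = C * x ^ 2) :
    HasDerivAt (deriv H) (2 * (H r - H r ^ 2 + r * H r * deriv H r) / r ^ 2) r := by
  have hH' : deriv H =ᶠ[𝓝 r] fun x => (C * x ^ 2 - H x + H x ^ 2) / x := by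
    filter_upwards [hRiccati, eventually_ne_nhds hr] with x hx hx0
    field_simp
    linarith
  have hquot := ((((hasDerivAt_pow 2 r).const_mul C).fun_sub hH.hasDerivAt).fun_add
    (hH.hasDerivAt.fun_pow 2)).fun_div (hasDerivAt_id' r) hr
  refine (hquot.congr_of_eventuallyEq hH').congr_deriv ?_
  have := hRiccati.self_of_nhds
  field_simp
  linear_combination -this

theorem hasDerivAt_bogomolnyiRadicand {K H : ℝ → ℝ} {r H'' : ℝ}
    (hK : DifferentiableAt ℝ K r) (hH : DifferentiableAt ℝ H r)
    (hH'' : HasDerivAt (deriv H) H'' r) :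
    HasDerivAt (bogomolnyiRadicand K H) (r * H'' - 2 * K r * deriv K r) r :=
  ((((hasDerivAt_const r (1 : ℝ)).fun_sub (hK.hasDerivAt.fun_pow 2)).fun_add
    ((hasDerivAt_id' r).fun_mul hH'')).fun_sub hH.hasDerivAt).congr_deriv (by ring)

theorem bogomolnyi_equations_of_values {ε r k k' h h' h'' m l m' : ℝ} (hε : ε ^ 2 = 1)
    (hs : 0 < 1 - k ^ 2 + r * h' - h)
    (hm : m = ε * √(1 - k ^ 2 + r * h' - h))
    (hl : l = -ε * (r * k' - k ^ 2 + 1 + r * h' - (k + 1) * h) / √(1 - k ^ 2 + r * h' - h))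
    (hm' : m' = ε * ((r * h'' - 2 * k * k') / (2 * √(1 - k ^ 2 + r * h' - h))))
    (hh'' : r ^ 2 * h'' = 2 * (h - h ^ 2 + r * h * h')) :
    r * k' + m * (l + m) = k * h ∧
    -(r * k') + k ^ 2 - 1 - l * m = r * h' - h - k * h ∧
    r * m' - k * (l + m) = m * h := by
  set s := 1 - k ^ 2 + r * h' - h
  have hsq : √s ^ 2 = s := Real.sq_sqrt hs.le
  have hsqrt : √s ≠ 0 := (Real.sqrt_pos.mpr hs).ne'
  have hmm : m * m = s := by
    rw [hm]
    linear_combination √s ^ 2 * hε + hsq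
  have hlm : l * m = -(r * k' + s - k * h) := by
    rw [hl, hm]
    field_simp
    linear_combination -(r * k' + s - k * h) * hε
  have hmm' : m * m' = (r * h'' - 2 * k * k') / 2 := by
    rw [hm, hm']
    field_simp
    linear_combination (r * h'' - 2 * k * k') * hε
  have hm0 : m ≠ 0 := fun h0 => hs.ne' (by rw [← hmm, h0, zero_mul])
  refine ⟨by linear_combination hlm + hmm, by linear_combination -hlm, ?_⟩
  refine mul_left_cancel₀ hm0 ?_
  linear_combination r * hmm' - k * hlm - (k + h) * hmm + hh'' / 2

theorem general_solution_satisfies_bogomolnyi_general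
    (C ε : ℝ) (hε : ε = 1 ∨ ε = -1) (K L M H : ℝ → ℝ)
    (hH : ∀ r > (0 : ℝ), DifferentiableAt ℝ H r)
    (hRiccati : ∀ r > (0 : ℝ), r * deriv H r + H r - (H r) ^ 2 = C * r ^ 2)
    (hK : ∀ r > (0 : ℝ), DifferentiableAt ℝ K r)
    (hpos : ∀ r > (0 : ℝ), 0 < 1 - (K r) ^ 2 + r * deriv H r - H r)
    (hM : ∀ r > (0 : ℝ),
      M r = ε * Real.sqrt (1 - (K r) ^ 2 + r * deriv H r - H r))
    (hL : ∀ r > (0 : ℝ),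
      L r = -ε * (r * deriv K r - (K r) ^ 2 + 1 + r * deriv H r
        - (K r + 1) * H r) / Real.sqrt (1 - (K r) ^ 2 + r * deriv H r - H r)) :
    BogomolnyiSystem K L M H := by
  intro r hr
  have hε2 : ε ^ 2 = 1 := by rcases hε with rfl | rfl <;> norm_num
  have hH'' := hasDerivAt_deriv_of_riccati hr.ne' (hH r hr)
    (eventually_gt_nhds hr |>.mono hRiccati)
  have hM' : HasDerivAt M _ r :=
    (((hasDerivAt_bogomolnyiRadicand (hK r hr) (hH r hr) hH'').sqrt (hpos r hr).ne').const_mul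
      ε).congr_of_eventuallyEq (eventually_gt_nhds hr |>.mono hM)
  exact bogomolnyi_equations_of_values hε2 (hpos r hr) (hM r hr) (hL r hr) hM'.deriv
    (by field_simp)

theorem general_solution_satisfies_bogomolnyi
    (C ε : ℝ) (hε : ε = 1 ∨ ε = -1) (K L M H : ℝ → ℝ)
    (hH : ∀ r > (0 : ℝ), DifferentiableAt ℝ H r)
    (hH' : ∀ r > (0 : ℝ), DifferentiableAt ℝ (deriv H) r)
    (hRiccati : ∀ r > (0 : ℝ), r * deriv H r + H r - (H r) ^ 2 = C * r ^ 2)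
    (hK : ∀ r > (0 : ℝ), DifferentiableAt ℝ K r)
    (hpos : ∀ r > (0 : ℝ), 0 < 1 - (K r) ^ 2 + r * deriv H r - H r)
    (hM : ∀ r > (0 : ℝ),
      M r = ε * Real.sqrt (1 - (K r) ^ 2 + r * deriv H r - H r))
    (hL : ∀ r > (0 : ℝ),
      L r = -ε * (r * deriv K r - (K r) ^ 2 + 1 + r * deriv H r
        - (K r + 1) * H r) / Real.sqrt (1 - (K r) ^ 2 + r * deriv H r - H r)) :
    BogomolnyiSystem K L M H :=
  general_solution_satisfies_bogomolnyi_general C ε hε K L M H hH hRiccati hK hpos hM hL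
end

section
/- Let K, L, M, H : (0,∞) → ℝ satisfy the spherically symmetric Bogomol'nyi ODE system, with K, L, M differentiable and H twice differentiable, and suppose M(r) ≠ 0 for all r > 0. Then H satisfies the second-order equation r²·H''(r) − 2·r·H'(r)·H(r) − 2·H(r) + 2·H(r)² = 0 for all r > 0 (which is equation H_ξξ − H_ξ − 2H_ξH − 2H + 2H² = 0 in the logarithmic variable ξ = ln r). -/
open Filter Topology

namespace BogomolnyiSystem

variable {K L M H : ℝ → ℝ}

theorem sq_add_sq_eq (hsys : BogomolnyiSystem K L M H) {r : ℝ} (hr : 0 < r) :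
    K r ^ 2 + M r ^ 2 = r * deriv H r - H r + 1 := by
  obtain ⟨hI, hII, -⟩ := hsys r hr
  linear_combination hI + hII

theorem mul_deriv_sq_add_sq (hsys : BogomolnyiSystem K L M H) {r : ℝ} (hr : 0 < r) :
    r * (2 * K r * deriv K r + 2 * M r * deriv M r) = 2 * H r * (K r ^ 2 + M r ^ 2) := by
  obtain ⟨hI, -, hIII⟩ := hsys r hr
  linear_combination 2 * K r * hI + 2 * M r * hIII

theorem deriv_sq_add_sq (hsys : BogomolnyiSystem K L M H) {r : ℝ} (hr : 0 < r)
    (hK : DifferentiableAt ℝ K r) (hM : DifferentiableAt ℝ M r)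
    (hH : DifferentiableAt ℝ H r) (hH' : DifferentiableAt ℝ (deriv H) r) :
    2 * K r * deriv K r + 2 * M r * deriv M r = r * deriv (deriv H) r := by
  have hfirst : (fun x => K x ^ 2 + M x ^ 2) =ᶠ[𝓝 r] fun x => x * deriv H x - H x + 1 := by
    filter_upwards [Ioi_mem_nhds hr] with x hx using hsys.sq_add_sq_eq hx
  have hlhs := (hK.hasDerivAt.pow 2).add (hM.hasDerivAt.pow 2)
  have hrhs := (((hasDerivAt_id r).mul hH'.hasDerivAt).sub hH.hasDerivAt).add_const 1
  have hderivs := (hlhs.congr_of_eventuallyEq hfirst.symm).unique hrhs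
  simp only [id] at hderivs
  linear_combination hderivs

end BogomolnyiSystem

theorem H_second_order_equation_general
    (K L M H : ℝ → ℝ)
    (hK : ∀ r > (0 : ℝ), DifferentiableAt ℝ K r)
    (hM : ∀ r > (0 : ℝ), DifferentiableAt ℝ M r)
    (hH : ∀ r > (0 : ℝ), DifferentiableAt ℝ H r)
    (hH' : ∀ r > (0 : ℝ), DifferentiableAt ℝ (deriv H) r)
    (hsys : BogomolnyiSystem K L M H) :
    ∀ r > (0 : ℝ),
      r ^ 2 * deriv (deriv H) r - 2 * r * deriv H r * H r
        - 2 * H r + 2 * (H r) ^ 2 = 0 := by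
  intro r hr
  have hfirst := hsys.sq_add_sq_eq hr
  have hscale := hsys.mul_deriv_sq_add_sq hr
  have hderiv := hsys.deriv_sq_add_sq hr (hK r hr) (hM r hr) (hH r hr) (hH' r hr)
  rw [hderiv, hfirst] at hscale
  linear_combination hscale

theorem H_second_order_equation
    (K L M H : ℝ → ℝ)
    (hK : ∀ r > (0 : ℝ), DifferentiableAt ℝ K r)
    (hL : ∀ r > (0 : ℝ), DifferentiableAt ℝ L r)
    (hM : ∀ r > (0 : ℝ), DifferentiableAt ℝ M r)
    (hH : ∀ r > (0 : ℝ), DifferentiableAt ℝ H r)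
    (hH' : ∀ r > (0 : ℝ), DifferentiableAt ℝ (deriv H) r)
    (hsys : BogomolnyiSystem K L M H)
    (hMne : ∀ r > (0 : ℝ), M r ≠ 0) :
    ∀ r > (0 : ℝ),
      r ^ 2 * deriv (deriv H) r - 2 * r * deriv H r * H r
        - 2 * H r + 2 * (H r) ^ 2 = 0 :=
  H_second_order_equation_general K L M H hK hM hH hH' hsys
end
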